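/- arXiv:2106.06893 — 2 statements merged into one kernel-verified Lean document; each statement's English description precedes it below -/
import Mathlib

section
/- Let v₀, v₁, …, v_k (k ≥ 2) be points in ℝⁿ with consecutive points distinct, forming a polygonal path, and let tc denote the sum of exterior angles at interior vertices, i.e., tc = Σ_{i=1}^{k−1} angle(v_i − v_{i−1}, v_{i+1} − v_i). If the path is extended on both sides by segments from a to v₀ and from v_k to b (with a ≠ v₀, v_k ≠ b), then replacing the entire sub-path v₀,…,v_k by the single segment from v₀ to v_k does not increase the total turning: angle(v₀ − a, v_k − v₀) + angle(v_k − v₀, b − v_k) ≤ angle(v₀ − a, v₁ − v₀) + tc + angle(v_k − v_{k−1}, b − v_k). -/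
open InnerProductGeometry

/-!
Cutting a corner never increases turning: for the broken line with edge vectors `w₁`, `w₂`, the
chord `w₁ + w₂` splits the exterior angle `angle w₁ w₂` into `angle w₁ (w₁ + w₂)` and
`angle (w₁ + w₂) w₂`, and the triangle inequality for angles absorbs these into the neighbouring
turns. Induction on `k`: the chord from `v 0` to `v (k + 1)` cuts the corner at `v k` between
the chord to `v k` and the last edge.
-/

variable {V : Type*} [NormedAddCommGroup V] [InnerProductSpace ℝ V]

theorem angle_add_add_angle_add_le (u w₁ w₂ z : V) :
    angle u (w₁ + w₂) + angle (w₁ + w₂) z ≤ angle u w₁ + angle w₁ w₂ + angle w₂ z := by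
  rcases eq_or_ne w₂ 0 with rfl | hw₂
  · -- the zero vector makes a right angle with everything
    simp only [add_zero, angle_zero_left, angle_zero_right]
    linarith [angle_le_pi w₁ z]
  have hsplit := angle_eq_angle_add_add_angle_add w₁ hw₂
  have h₁ := angle_le_angle_add_angle u w₁ (w₁ + w₂)
  have h₂ := angle_le_angle_add_angle (w₁ + w₂) w₂ z
  rw [angle_comm w₂] at hsplit
  linarith

theorem angle_chord_add_angle_chord_le (k : ℕ) (hk : 1 ≤ k) (v : ℕ → V) (a b : V) :
    angle (v 0 - a) (v k - v 0) + angle (v k - v 0) (b - v k) ≤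
      angle (v 0 - a) (v 1 - v 0)
        + (∑ i ∈ Finset.Ico 1 k, angle (v i - v (i - 1)) (v (i + 1) - v i))
        + angle (v k - v (k - 1)) (b - v k) := by
  induction k, hk using Nat.le_induction generalizing b with
  | base => simp
  | succ k hk ih =>
    have hcut := angle_add_add_angle_add_le (v 0 - a) (v k - v 0) (v (k + 1) - v k)
      (b - v (k + 1))
    rw [sub_add_sub_cancel'] at hcut
    have hprefix := ih (v (k + 1))
    rw [Finset.sum_Ico_succ_top hk, Nat.add_sub_cancel]
    linarith

theorem stmt_10_general (n k : ℕ) (hk : 2 ≤ k) (v : ℕ → EuclideanSpace ℝ (Fin n))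
    (a b : EuclideanSpace ℝ (Fin n)) :
    angle (v 0 - a) (v k - v 0) + angle (v k - v 0) (b - v k) ≤
      angle (v 0 - a) (v 1 - v 0)
        + (∑ i ∈ Finset.Ico 1 k, angle (v i - v (i - 1)) (v (i + 1) - v i))
        + angle (v k - v (k - 1)) (b - v k) :=
  angle_chord_add_angle_chord_le k (by omega) v a b

/-- Milnor's chord lemma: replacing a polygonal sub-path `v₀, …, v_k` (with
consecutive points distinct), extended by segments from `a` to `v₀` and from `v_k`
to `b`, by the single chord from `v₀` to `v_k` does not increase the total turning. -/
theorem stmt_10 (n k : ℕ) (hk : 2 ≤ k) (v : ℕ → EuclideanSpace ℝ (Fin n))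
    (a b : EuclideanSpace ℝ (Fin n))
    (hcons : ∀ i < k, v i ≠ v (i + 1)) (ha : a ≠ v 0) (hb : v k ≠ b) :
    angle (v 0 - a) (v k - v 0) + angle (v k - v 0) (b - v k) ≤
      angle (v 0 - a) (v 1 - v 0)
        + (∑ i ∈ Finset.Ico 1 k, angle (v i - v (i - 1)) (v (i + 1) - v i))
        + angle (v k - v (k - 1)) (b - v k) :=
  stmt_10_general n k hk v a b
end

section
/- Let Γ be a compact subset of ℝⁿ and for v ∈ ℝⁿ \ Γ let C_{Γ,v} = {v + s(x − v) : x ∈ Γ, s ≥ 0} be the cone over Γ with vertex v. Then the map v ↦ C_{Γ,v} is continuous on ℝⁿ \ Γ in the sense of Hausdorff distance on compact subsets: if v_i → v in ℝⁿ \ Γ, then C_{Γ,v_i} ∩ B(0,R) converges to C_{Γ,v} ∩ B(0,R) in Hausdorff distance for every R > 0 with Γ ⊆ B(0,R). -/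
/-!
Fix `x ∈ Γ` and a point `y = u + s • (x - u)` of the truncated cone with vertex `u`. Since `u`
stays a distance `δ` away from `Γ`, the parameter `s` is bounded by some `M`, so moving the vertex
to `u'` moves `y` to `y' = u' + s • (x - u')` at distance at most `(1 + M) * dist u u'`. The point
`y'` may leave the ball `B(0,R)`, but only by `η = (1 + M) * dist u u'`; since `x` lies in the
ball and the segment `[y', x]` lies in the cone with vertex `u'`, the strict convexity of the ball
yields a point of that segment in the ball within `√(2Rη + η²)` of `y'`.
-/

open Metric Filter

section ConeContinuity

variable {E : Type*} [NormedAddCommGroup E] [InnerProductSpace ℝ E]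

def vertexCone (Γ : Set E) (u : E) : Set E :=
  {y | ∃ x ∈ Γ, ∃ s : ℝ, 0 ≤ s ∧ y = u + s • (x - u)}

theorem norm_one_sub_smul_add_smul_sq (a b : E) (t : ℝ) :
    ‖(1 - t) • a + t • b‖ ^ 2 =
      (1 - t) * ‖a‖ ^ 2 + t * ‖b‖ ^ 2 - t * (1 - t) * ‖a - b‖ ^ 2 := by
  simp only [← real_inner_self_eq_norm_sq, inner_add_left, inner_add_right, inner_sub_left,
    inner_sub_right, real_inner_smul_left, real_inner_smul_right, real_inner_comm b a]
  ring

theorem exists_mem_segment_norm_le_dist_le {x y : E} {R η : ℝ} (hη : 0 ≤ η) (hx : ‖x‖ ≤ R)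
    (hy : ‖y‖ ≤ R + η) :
    ∃ z ∈ segment ℝ y x, ‖z‖ ≤ R ∧ dist y z ≤ √(2 * R * η + η ^ 2) := by
  have hR : 0 ≤ R := (norm_nonneg x).trans hx
  set A := 2 * R * η + η ^ 2
  have hA : 0 ≤ A := by positivity
  set D := ‖y - x‖
  by_cases hD : D ^ 2 ≤ A
  · exact ⟨x, right_mem_segment ℝ y x, hx,
      by rw [dist_eq_norm]; exact (Real.le_sqrt (norm_nonneg _) hA).2 hD⟩
  rw [not_le] at hD
  have hDpos : 0 < D ^ 2 := hA.trans_lt hD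
  -- With `t * D ^ 2 = A`, the loss `t * (1 - t) * D ^ 2` in `norm_one_sub_smul_add_smul_sq`
  -- exactly compensates the excess `(1 - t) * A` of `‖y‖ ^ 2` over `R ^ 2`.
  set t := A / D ^ 2
  have ht0 : 0 ≤ t := by positivity
  have ht1 : t ≤ 1 := (div_le_one hDpos).2 hD.le
  have htD : t * D ^ 2 = A := div_mul_cancel₀ A hDpos.ne'
  refine ⟨(1 - t) • y + t • x, ⟨1 - t, t, by linarith, ht0, by ring, rfl⟩, ?_, ?_⟩
  · have hsq : ‖(1 - t) • y + t • x‖ ^ 2 ≤ R ^ 2 := by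
      rw [norm_one_sub_smul_add_smul_sq]
      have hy2 : ‖y‖ ^ 2 ≤ (R + η) ^ 2 := by gcongr
      have hx2 : ‖x‖ ^ 2 ≤ R ^ 2 := by gcongr
      nlinarith
    exact (pow_le_pow_iff_left₀ (norm_nonneg _) hR two_ne_zero).1 hsq
  · have hyz : y - ((1 - t) • y + t • x) = t • (y - x) := by module
    rw [dist_eq_norm, hyz, norm_smul, Real.norm_of_nonneg ht0,
      Real.le_sqrt (by positivity) hA]
    calc (t * D) ^ 2 = t * (t * D ^ 2) := by ring
      _ ≤ A := by rw [htD]; exact mul_le_of_le_one_left hA ht1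

theorem segment_subset_vertexCone {Γ : Set E} {u x : E} (hx : x ∈ Γ) {s : ℝ} (hs : 0 ≤ s) :
    segment ℝ (u + s • (x - u)) x ⊆ vertexCone Γ u := by
  rintro _ ⟨a, b, ha, hb, hab, rfl⟩
  obtain rfl : a = 1 - b := eq_sub_of_add_eq hab
  exact ⟨x, hx, (1 - b) * s + b, by positivity, by module⟩

theorem dist_add_smul_sub_add_smul_sub (u u' x : E) (s : ℝ) :
    dist (u + s • (x - u)) (u' + s • (x - u')) = |1 - s| * dist u u' := by
  rw [dist_eq_norm, dist_eq_norm, ← Real.norm_eq_abs, ← norm_smul]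
  congr 1
  module

theorem exists_mem_vertexCone_inter_closedBall_dist_le {Γ : Set E} {R δ M : ℝ} {u u' y : E}
    (hΓR : Γ ⊆ closedBall 0 R) (hδ : 0 < δ) (hu : ∀ x ∈ Γ, δ ≤ dist u x)
    (hM : R + ‖u‖ ≤ M * δ) (hy : y ∈ vertexCone Γ u ∩ closedBall 0 R) :
    ∃ z ∈ vertexCone Γ u' ∩ closedBall 0 R, dist y z ≤
      (1 + M) * dist u u' + √(2 * R * ((1 + M) * dist u u') + ((1 + M) * dist u u') ^ 2) := by
  obtain ⟨⟨x, hx, s, hs, rfl⟩, hyR⟩ := hy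
  rw [mem_closedBall_zero_iff] at hyR
  have hsM : s ≤ M := by
    have hsx : s * dist u x ≤ R + ‖u‖ := by
      have := norm_sub_le (u + s • (x - u)) u
      rw [add_sub_cancel_left, norm_smul, Real.norm_of_nonneg hs, ← dist_eq_norm'] at this
      linarith
    have : s * δ ≤ M * δ := by nlinarith [hu x hx]
    exact le_of_mul_le_mul_right this hδ
  have hM1 : 0 ≤ 1 + M := by linarith
  set η := (1 + M) * dist u u'
  have hshift : dist (u + s • (x - u)) (u' + s • (x - u')) ≤ η := by
    rw [dist_add_smul_sub_add_smul_sub]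
    refine mul_le_mul_of_nonneg_right ?_ dist_nonneg
    rw [abs_le]
    constructor <;> linarith
  have hy' : ‖u' + s • (x - u')‖ ≤ R + η := by
    have := norm_le_norm_add_norm_sub' (u' + s • (x - u')) (u + s • (x - u))
    rw [← dist_eq_norm'] at this
    linarith
  obtain ⟨z, hz, hzR, hdz⟩ := exists_mem_segment_norm_le_dist_le (by positivity)
    (mem_closedBall_zero_iff.1 (hΓR hx)) hy'
  exact ⟨z, ⟨segment_subset_vertexCone hx hs hz, mem_closedBall_zero_iff.2 hzR⟩,
    (dist_triangle _ _ _).trans (add_le_add hshift hdz)⟩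

theorem hausdorffDist_vertexCone_inter_closedBall_le {Γ : Set E} {R δ M : ℝ} {u u' : E}
    (hR : 0 ≤ R) (hΓR : Γ ⊆ closedBall 0 R) (hδ : 0 < δ) (hu : ∀ x ∈ Γ, δ ≤ dist u x)
    (hu' : ∀ x ∈ Γ, δ ≤ dist u' x) (hMu : R + ‖u‖ ≤ M * δ) (hMu' : R + ‖u'‖ ≤ M * δ) :
    hausdorffDist (vertexCone Γ u ∩ closedBall 0 R) (vertexCone Γ u' ∩ closedBall 0 R) ≤
      (1 + M) * dist u u' + √(2 * R * ((1 + M) * dist u u') + ((1 + M) * dist u u') ^ 2) := by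
  have hM : 0 ≤ M := nonneg_of_mul_nonneg_left ((add_nonneg hR (norm_nonneg u)).trans hMu) hδ
  refine hausdorffDist_le_of_mem_dist (by positivity) (fun y hy => ?_) (fun y hy => ?_)
  · exact exists_mem_vertexCone_inter_closedBall_dist_le hΓR hδ hu hMu hy
  · rw [dist_comm u u']
    exact exists_mem_vertexCone_inter_closedBall_dist_le hΓR hδ hu' hMu' hy

end ConeContinuity

theorem stmt_14_general (n : ℕ) (Γ : Set (EuclideanSpace ℝ (Fin n))) (hΓ : IsCompact Γ)
    (v : ℕ → EuclideanSpace ℝ (Fin n)) (w : EuclideanSpace ℝ (Fin n))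
    (hw : w ∉ Γ) (hlim : Tendsto v atTop (nhds w))
    (R : ℝ) (hR : 0 < R) (hΓR : Γ ⊆ closedBall 0 R) :
    Tendsto (fun i => hausdorffDist
        ({y | ∃ x ∈ Γ, ∃ s : ℝ, 0 ≤ s ∧ y = v i + s • (x - v i)} ∩ closedBall 0 R)
        ({y | ∃ x ∈ Γ, ∃ s : ℝ, 0 ≤ s ∧ y = w + s • (x - w)} ∩ closedBall 0 R))
      atTop (nhds 0) := by
  obtain ⟨ε, hε, hball⟩ := isOpen_iff.1 hΓ.isClosed.isOpen_compl w hw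
  have hε2 : 0 < ε / 2 := half_pos hε
  have hfar : ∀ u ∈ closedBall w (ε / 2), ∀ x ∈ Γ, ε / 2 ≤ dist u x := by
    intro u hu x hx
    have : ε ≤ dist w x := not_lt.1 fun h => hball (mem_ball'.2 h) hx
    linarith [dist_triangle w u x, mem_closedBall'.1 hu]
  set M := (R + ‖w‖ + ε / 2) / (ε / 2)
  have hnorm : ∀ u ∈ closedBall w (ε / 2), R + ‖u‖ ≤ M * (ε / 2) := by
    intro u hu
    rw [div_mul_cancel₀ _ hε2.ne']
    linarith [norm_le_of_mem_closedBall hu]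
  have hbound : Tendsto (fun d => (1 + M) * d + √(2 * R * ((1 + M) * d) + ((1 + M) * d) ^ 2))
      (nhds 0) (nhds 0) := by
    simpa using (by fun_prop : Continuous fun d : ℝ =>
      (1 + M) * d + √(2 * R * ((1 + M) * d) + ((1 + M) * d) ^ 2)).tendsto 0
  refine squeeze_zero' (Eventually.of_forall fun i => hausdorffDist_nonneg) ?_
    (hbound.comp (tendsto_iff_dist_tendsto_zero.1 hlim))
  filter_upwards [hlim (closedBall_mem_nhds w hε2)] with i hi
  have hw' : w ∈ closedBall w (ε / 2) := mem_closedBall_self hε2.le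
  exact hausdorffDist_vertexCone_inter_closedBall_le hR.le hΓR hε2 (hfar _ hi) (hfar w hw')
    (hnorm _ hi) (hnorm w hw')

/-- Continuity of the cone construction away from a compact set `Γ ⊆ ℝⁿ`: if
`v i → w` with all `v i` and `w` outside `Γ`, then for every `R > 0` with
`Γ ⊆ B(0,R)`, the truncated cones `C_{Γ, v i} ∩ B(0,R)` converge to
`C_{Γ, w} ∩ B(0,R)` in Hausdorff distance. -/
theorem stmt_14 (n : ℕ) (Γ : Set (EuclideanSpace ℝ (Fin n))) (hΓ : IsCompact Γ)
    (v : ℕ → EuclideanSpace ℝ (Fin n)) (w : EuclideanSpace ℝ (Fin n))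
    (hv : ∀ i, v i ∉ Γ) (hw : w ∉ Γ) (hlim : Tendsto v atTop (nhds w))
    (R : ℝ) (hR : 0 < R) (hΓR : Γ ⊆ closedBall 0 R) :
    Tendsto (fun i => hausdorffDist
        ({y | ∃ x ∈ Γ, ∃ s : ℝ, 0 ≤ s ∧ y = v i + s • (x - v i)} ∩ closedBall 0 R)
        ({y | ∃ x ∈ Γ, ∃ s : ℝ, 0 ≤ s ∧ y = w + s • (x - w)} ∩ closedBall 0 R))
      atTop (nhds 0) :=
  stmt_14_general n Γ hΓ v w hw hlim R hR hΓR
end
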